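/- Let X ⊆ ℝⁿ be nonempty, closed, and convex, and suppose x : [0,T] → ℝⁿ is continuously differentiable with x(0) ∈ X and, for all t, ẋ(t) = Π_X(x(t) - φ(t)) - x(t) for some continuous φ : [0,T] → ℝⁿ. Then x(t) ∈ X for all t ∈ [0,T]. -/

import Mathlib

/-!
The squared distance `V t = ‖x t - Π_X (x t)‖²` to `X` is a Lyapunov function. At each time it is
majorized by `z ↦ ‖x z - Π_X (x t)‖²`, with equality at `z = t`, and the derivative of the majorant at
`t` is `2 ⟪x t - Π_X (x t), q - x t⟫ ≤ 0` with `q ∈ X`, by the variational inequality for the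
projection onto a convex set. So `V` has nonpositive right Dini derivatives, hence stays at
`V 0 = 0`, and `x t = Π_X (x t) ∈ X`.
-/

open Set Filter
open scoped RealInnerProductSpace Topology

theorem frequently_slope_lt_of_le_of_hasDerivWithinAt {f g : ℝ → ℝ} {t g' r : ℝ}
    (hg : HasDerivWithinAt g g' (Ici t) t) (hfg : ∀ z, f z ≤ g z) (heq : f t = g t)
    (hr : g' < r) : ∃ᶠ z in 𝓝[>] t, slope f t z < r := by
  refine Eventually.frequently ?_
  filter_upwards [hg.Ioi_of_Ici.limsup_slope_le' (lt_irrefl t) hr, self_mem_nhdsWithin]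
    with z hgz hz
  refine lt_of_le_of_lt ?_ hgz
  rw [slope_def_field, slope_def_field]
  exact div_le_div_of_nonneg_right (by linarith [hfg z]) (sub_pos.2 hz).le

section NearestPoint

variable {E : Type*} [NormedAddCommGroup E] {X : Set E} {proj : E → E}

theorem norm_sub_proj_eq_zero_iff (hmem : ∀ z, proj z ∈ X)
    (hdist : ∀ z, ∀ w ∈ X, ‖z - proj z‖ ≤ ‖z - w‖) {z : E} :
    ‖z - proj z‖ = 0 ↔ z ∈ X := by
  refine ⟨fun h => ?_, fun hz => le_antisymm ?_ (norm_nonneg _)⟩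
  · rw [norm_eq_zero, sub_eq_zero] at h
    exact h ▸ hmem z
  · simpa using hdist z z hz

theorem lipschitzWith_one_norm_sub_proj (hmem : ∀ z, proj z ∈ X)
    (hdist : ∀ z, ∀ w ∈ X, ‖z - proj z‖ ≤ ‖z - w‖) :
    LipschitzWith 1 fun z => ‖z - proj z‖ :=
  LipschitzWith.of_le_add fun z y =>
    calc ‖z - proj z‖ ≤ ‖z - proj y‖ := hdist z (proj y) (hmem y)
      _ ≤ ‖y - proj y‖ + dist z y := by
        rw [dist_eq_norm, add_comm, ← sub_add_sub_cancel z y (proj y)]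
        exact norm_add_le _ _

variable [InnerProductSpace ℝ E]

theorem real_inner_sub_proj_sub_proj_nonpos (hconv : Convex ℝ X) (hmem : ∀ z, proj z ∈ X)
    (hdist : ∀ z, ∀ w ∈ X, ‖z - proj z‖ ≤ ‖z - w‖) (z : E) {w : E} (hw : w ∈ X) :
    ⟪z - proj z, w - proj z⟫ ≤ 0 := by
  have : Nonempty X := ⟨⟨proj z, hmem z⟩⟩
  refine (norm_eq_iInf_iff_real_inner_le_zero hconv (hmem z)).1 ?_ w hw
  exact le_antisymm (le_ciInf fun w => hdist z w w.2)
    (ciInf_le (f := fun w : X => ‖z - w‖) ⟨0, by rintro _ ⟨_, rfl⟩; exact norm_nonneg _⟩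
      ⟨proj z, hmem z⟩)

theorem frequently_slope_sq_norm_sub_proj_lt (hconv : Convex ℝ X) (hmem : ∀ z, proj z ∈ X)
    (hdist : ∀ z, ∀ w ∈ X, ‖z - proj z‖ ≤ ‖z - w‖) {x : ℝ → E} {t : ℝ} {q : E} (hq : q ∈ X)
    (hx : HasDerivWithinAt x (q - x t) (Ici t) t) {r : ℝ} (hr : 0 < r) :
    ∃ᶠ z in 𝓝[>] t, slope (fun s => ‖x s - proj (x s)‖ ^ 2) t z < r := by
  set p := proj (x t)
  have hderiv_nonpos : 2 * ⟪x t - p, q - x t⟫ ≤ 0 := by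
    have hsplit : ⟪x t - p, q - x t⟫ = ⟪x t - p, q - p⟫ - ⟪x t - p, x t - p⟫ := by
      rw [← inner_sub_right, sub_sub_sub_cancel_right]
    have hvi := real_inner_sub_proj_sub_proj_nonpos hconv hmem hdist (x t) hq
    linarith [real_inner_self_nonneg (x := x t - p)]
  exact frequently_slope_lt_of_le_of_hasDerivWithinAt (hx.sub_const p).norm_sq
    (fun z => pow_le_pow_left₀ (norm_nonneg _) (hdist _ p (hmem _)) 2) rfl
    (hderiv_nonpos.trans_lt hr)

end NearestPoint

theorem projected_dynamics_invariance_general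
    {n : ℕ} (X : Set (EuclideanSpace ℝ (Fin n)))
    (hXconv : Convex ℝ X)
    (proj : EuclideanSpace ℝ (Fin n) → EuclideanSpace ℝ (Fin n))
    (hprojMem : ∀ z, proj z ∈ X)
    (hprojDist : ∀ z, ∀ w ∈ X, ‖z - proj z‖ ≤ ‖z - w‖)
    (T : ℝ)
    (x φ : ℝ → EuclideanSpace ℝ (Fin n))
    (hx : ∀ t ∈ Set.Icc (0 : ℝ) T,
      HasDerivWithinAt x (proj (x t - φ t) - x t) (Set.Icc 0 T) t)
    (hx0 : x 0 ∈ X) :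
    ∀ t ∈ Set.Icc (0 : ℝ) T, x t ∈ X := by
  have hV : ∀ t ∈ Icc (0 : ℝ) T, ‖x t - proj (x t)‖ ^ 2 ≤ 0 := by
    refine image_le_of_liminf_slope_right_le_deriv_boundary (B := 0) (B' := 0) ?_ ?_
      continuousOn_const (fun _ _ => hasDerivWithinAt_const _ _ _) ?_
    · exact ((lipschitzWith_one_norm_sub_proj hprojMem hprojDist).continuous.comp_continuousOn
        fun t ht => (hx t ht).continuousWithinAt).pow 2
    · simp [(norm_sub_proj_eq_zero_iff hprojMem hprojDist).2 hx0]
    · intro t ht r hr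
      exact frequently_slope_sq_norm_sub_proj_lt hXconv hprojMem hprojDist (hprojMem _)
        ((hx t (Ico_subset_Icc_self ht)).mono_of_mem_nhdsWithin (Icc_mem_nhdsGE_of_mem ht)) hr
  intro t ht
  refine (norm_sub_proj_eq_zero_iff hprojMem hprojDist).1 ?_
  exact pow_eq_zero_iff two_ne_zero |>.1 (le_antisymm (hV t ht) (sq_nonneg _))

/-- If `x : [0,T] → ℝⁿ` is continuously differentiable with
`x 0 ∈ X` and `ẋ(t) = proj (x t - φ t) - x t` for a continuous `φ`, where `X` is
nonempty closed convex with Euclidean projection `proj`, then `x t ∈ X` on `[0,T]`. -/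
theorem projected_dynamics_invariance
    {n : ℕ} (X : Set (EuclideanSpace ℝ (Fin n)))
    (hXne : X.Nonempty) (hXcl : IsClosed X) (hXconv : Convex ℝ X)
    (proj : EuclideanSpace ℝ (Fin n) → EuclideanSpace ℝ (Fin n))
    (hprojMem : ∀ z, proj z ∈ X)
    (hprojDist : ∀ z, ∀ w ∈ X, ‖z - proj z‖ ≤ ‖z - w‖)
    (T : ℝ) (hT : 0 ≤ T)
    (x φ : ℝ → EuclideanSpace ℝ (Fin n))
    (hφ : ContinuousOn φ (Set.Icc 0 T))
    (hx : ∀ t ∈ Set.Icc (0 : ℝ) T,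
      HasDerivWithinAt x (proj (x t - φ t) - x t) (Set.Icc 0 T) t)
    (hx0 : x 0 ∈ X) :
    ∀ t ∈ Set.Icc (0 : ℝ) T, x t ∈ X :=
  projected_dynamics_invariance_general X hXconv proj hprojMem hprojDist T x φ hx hx0
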